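/- arXiv:1308.2520 — 6 statements merged into one kernel-verified Lean document; each statement's English description precedes it below -/
import Mathlib

section
/- Let A₁, A₂ be convex subsets of a Banach space X with 0 ∈ A₁ ∩ A₂. Then (A₁ + A₂)° = A₁° # A₂°, where for convex sets B₁, B₂ in X* containing 0, B₁ # B₂ := (⋃_{0<t<1} (t·B₁ ∩ (1−t)·B₂)) ∪ (B₁ ∩ 0⁺B₂) ∪ (B₂ ∩ 0⁺B₁). -/
open Set Metric
open scoped Pointwise

noncomputable section

/-- The recession cone `0⁺A = {x | A + t • x ⊆ A for all t ≥ 0}`. -/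
def recCone {X : Type*} [AddCommGroup X] [Module ℝ X] (A : Set X) : Set X :=
  {x | ∀ t : ℝ, 0 ≤ t → ∀ a ∈ A, a + t • x ∈ A}

/-- The inverse sum `B₁ # B₂`. -/
def invSum {X : Type*} [AddCommGroup X] [Module ℝ X] (B₁ B₂ : Set X) : Set X :=
  (⋃ t ∈ Set.Ioo (0:ℝ) 1, (t • B₁ ∩ (1 - t) • B₂)) ∪ (B₁ ∩ recCone B₂) ∪ (B₂ ∩ recCone B₁)

/-- The polar `A° = {x* | ⟨x*, x⟩ ≤ 1 ∀ x ∈ A}` of a set in `X`, a subset of the dual. -/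
def pol {X : Type*} [NormedAddCommGroup X] [NormedSpace ℝ X] (A : Set X) :
    Set (X →L[ℝ] ℝ) := {f | ∀ x ∈ A, f x ≤ 1}

/-- The dual cone (negative polar) `A^⊖ = {x* | ⟨x*, x⟩ ≤ 0 ∀ x ∈ A}`. -/
def dCone {X : Type*} [NormedAddCommGroup X] [NormedSpace ℝ X] (A : Set X) :
    Set (X →L[ℝ] ℝ) := {f | ∀ x ∈ A, f x ≤ 0}

/-- The weak* closure of a set of continuous linear functionals. -/
def wcl {X : Type*} [NormedAddCommGroup X] [NormedSpace ℝ X]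
    (S : Set (X →L[ℝ] ℝ)) : Set (X →L[ℝ] ℝ) :=
  {f | StrongDual.toWeakDual (𝕜 := ℝ) (E := X) f ∈
    closure (StrongDual.toWeakDual (𝕜 := ℝ) (E := X) '' S)}

/-- The set of all finite sums `Σ_{i ∈ I₀} x_i` with `x_i ∈ P i`, `I₀ ⊆ I` finite. -/
def finSums {X : Type*} [NormedAddCommGroup X] [NormedSpace ℝ X] {I : Type*}
    (P : I → Set (X →L[ℝ] ℝ)) : Set (X →L[ℝ] ℝ) :=
  {g | ∃ (s : Finset I) (x : I → (X →L[ℝ] ℝ)), (∀ i ∈ s, x i ∈ P i) ∧ g = ∑ i ∈ s, x i}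

/-- The extended Jameson property `(G_η)`: every `f` in the weak* closure of the set of
finite sums of the `P i` is a weak* limit (i.e. lies in the weak* closure) of finite sums
`Σ_{i ∈ s} x_i`, `x_i ∈ P i`, with `Σ_{i ∈ s} ‖x_i‖ ≤ (1/η) ‖f‖`. -/
def propG {X : Type*} [NormedAddCommGroup X] [NormedSpace ℝ X] {I : Type*}
    (P : I → Set (X →L[ℝ] ℝ)) (η : ℝ) : Prop :=
  ∀ f ∈ wcl (finSums P),
    f ∈ wcl {g | ∃ (s : Finset I) (x : I → (X →L[ℝ] ℝ)),
      (∀ i ∈ s, x i ∈ P i) ∧ g = ∑ i ∈ s, x i ∧ ∑ i ∈ s, ‖x i‖ ≤ (1 / η) * ‖f‖}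

/-- The normal cone `N(C, x) = {x* | ⟨x*, c − x⟩ ≤ 0 ∀ c ∈ C}`. -/
def ncone {X : Type*} [NormedAddCommGroup X] [NormedSpace ℝ X] (C : Set X) (x : X) :
    Set (X →L[ℝ] ℝ) := {f | ∀ c ∈ C, f (c - x) ≤ 0}

/-- The conical hull of a convex set `S`: `cone S = {t • s | t ≥ 0, s ∈ S}`. -/
def coneHull {X : Type*} [AddCommGroup X] [Module ℝ X] (S : Set X) : Set X :=
  {y | ∃ t : ℝ, 0 ≤ t ∧ ∃ s ∈ S, y = t • s}

end

/- A functional `f` lies in `(A₁ + A₂)°` iff `sup f(A₁) + sup f(A₂) ≤ 1`. With `t = sup f(A₁)`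
this puts `f` in `t • A₁° ∩ (1 - t) • A₂°`, unless one supremum vanishes (both are `≥ 0` as
`0 ∈ Aᵢ`); then `f ≤ 0` on that `Aᵢ`, which says exactly that `f` lies in the recession cone
of `Aᵢ°`. -/

lemma exists_forall_le_and_forall_le_sub {α β : Type*} {s : Set α} {t : Set β} {u : α → ℝ}
    {v : β → ℝ} {r : ℝ} (hs : s.Nonempty) (ht : t.Nonempty)
    (h : ∀ a ∈ s, ∀ b ∈ t, u a + v b ≤ r) :
    ∃ c, (∀ a ∈ s, u a ≤ c) ∧ ∀ b ∈ t, v b ≤ r - c := by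
  obtain ⟨b₀, hb₀⟩ := ht
  have hbdd : BddAbove (u '' s) :=
    ⟨r - v b₀, forall_mem_image.mpr fun a ha => by linarith [h a ha b₀ hb₀]⟩
  refine ⟨sSup (u '' s), fun a ha => le_csSup hbdd (mem_image_of_mem u ha), fun b hb => ?_⟩
  have : sSup (u '' s) ≤ r - v b :=
    csSup_le (hs.image u) (forall_mem_image.mpr fun a ha => by linarith [h a ha b hb])
  linarith

section Polar

variable {X : Type*} [NormedAddCommGroup X] [NormedSpace ℝ X]

lemma zero_mem_pol (A : Set X) : (0 : X →L[ℝ] ℝ) ∈ pol A := fun x _ => by simp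

lemma mem_pol_add_iff {A₁ A₂ : Set X} {f : X →L[ℝ] ℝ} :
    f ∈ pol (A₁ + A₂) ↔ ∀ a ∈ A₁, ∀ b ∈ A₂, f a + f b ≤ 1 := by
  simp only [pol, mem_ofPred_eq, ← image2_add, forall_mem_image2, map_add]

lemma mem_smul_pol_iff {A : Set X} {f : X →L[ℝ] ℝ} {t : ℝ} (ht : 0 < t) :
    f ∈ t • pol A ↔ ∀ x ∈ A, f x ≤ t := by
  rw [mem_smul_set_iff_inv_smul_mem₀ ht.ne']
  simp only [pol, mem_ofPred_eq, smul_apply, smul_eq_mul,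
    inv_mul_le_iff₀ ht, mul_one]

lemma recCone_pol_eq_dCone (A : Set X) : recCone (pol A) = dCone A := by
  ext f
  constructor
  · intro hf b hb
    by_contra! hpos
    -- moving `0 ∈ pol A` along `f` by `2 / f b` produces the value `2` at `b`
    have h := hf (2 / f b) (by positivity) 0 (zero_mem_pol A) b hb
    simp only [zero_add, smul_apply, smul_eq_mul,
      div_mul_cancel₀ _ hpos.ne'] at h
    norm_num at h
  · intro hf t ht g hg x hx
    simp only [add_apply, smul_apply, smul_eq_mul]
    nlinarith [hf x hx, hg x hx]

lemma invSum_pol_subset_pol_add (A₁ A₂ : Set X) :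
    invSum (pol A₁) (pol A₂) ⊆ pol (A₁ + A₂) := by
  rintro f ((hf | ⟨hf₁, hf₂⟩) | ⟨hf₂, hf₁⟩) <;> rw [mem_pol_add_iff] <;> intro a ha b hb
  · obtain ⟨t, ⟨ht₀, ht₁⟩, hft, hf1t⟩ := mem_iUnion₂.mp hf
    have ha' := (mem_smul_pol_iff ht₀).mp hft a ha
    have hb' := (mem_smul_pol_iff (sub_pos.mpr ht₁)).mp hf1t b hb
    linarith
  · rw [recCone_pol_eq_dCone] at hf₂
    linarith [hf₁ a ha, hf₂ b hb]
  · rw [recCone_pol_eq_dCone] at hf₁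
    linarith [hf₁ a ha, hf₂ b hb]

lemma pol_add_subset_invSum {A₁ A₂ : Set X} (h0₁ : (0 : X) ∈ A₁) (h0₂ : (0 : X) ∈ A₂) :
    pol (A₁ + A₂) ⊆ invSum (pol A₁) (pol A₂) := by
  intro f hf
  rw [mem_pol_add_iff] at hf
  by_cases hA₁ : f ∈ dCone A₁
  · refine Or.inr ⟨fun b hb => ?_, (recCone_pol_eq_dCone A₁).symm ▸ hA₁⟩
    simpa using hf 0 h0₁ b hb
  by_cases hA₂ : f ∈ dCone A₂
  · refine Or.inl (Or.inr ⟨fun a ha => ?_, (recCone_pol_eq_dCone A₂).symm ▸ hA₂⟩)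
    simpa using hf a ha 0 h0₂
  obtain ⟨a₁, ha₁, hfa₁⟩ : ∃ a ∈ A₁, 0 < f a := by simpa [dCone] using hA₁
  obtain ⟨b₁, hb₁, hfb₁⟩ : ∃ b ∈ A₂, 0 < f b := by simpa [dCone] using hA₂
  obtain ⟨c, hc₁, hc₂⟩ := exists_forall_le_and_forall_le_sub ⟨0, h0₁⟩ ⟨0, h0₂⟩ hf
  have hc_pos : 0 < c := hfa₁.trans_le (hc₁ a₁ ha₁)
  have hsub_pos : 0 < 1 - c := hfb₁.trans_le (hc₂ b₁ hb₁)
  refine Or.inl (Or.inl (mem_iUnion₂.mpr ⟨c, ⟨hc_pos, by linarith⟩, ?_, ?_⟩))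
  · exact (mem_smul_pol_iff hc_pos).mpr hc₁
  · exact (mem_smul_pol_iff hsub_pos).mpr hc₂

end Polar

theorem stmt5_general {X : Type*} [NormedAddCommGroup X] [NormedSpace ℝ X]
    (A₁ A₂ : Set X)
    (h0₁ : (0 : X) ∈ A₁) (h0₂ : (0 : X) ∈ A₂) :
    pol (A₁ + A₂) = invSum (pol A₁) (pol A₂) :=
  (pol_add_subset_invSum h0₁ h0₂).antisymm (invSum_pol_subset_pol_add A₁ A₂)

theorem stmt5 {X : Type*} [NormedAddCommGroup X] [NormedSpace ℝ X] [CompleteSpace X]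
    (A₁ A₂ : Set X) (h₁ : Convex ℝ A₁) (h₂ : Convex ℝ A₂)
    (h0₁ : (0 : X) ∈ A₁) (h0₂ : (0 : X) ∈ A₂) :
    pol (A₁ + A₂) = invSum (pol A₁) (pol A₂) :=
  stmt5_general A₁ A₂ h0₁ h0₂
end

section
/- If A₁ is a convex cone and A₂ is a convex set, both containing 0, then the inverse sum A₁ # A₂ equals A₁ ∩ A₂. -/
/-!
A convex cone is contained in its own recession cone, so `A₁ ∩ A₂` is already the piece
`A₂ ∩ 0⁺A₁` of the inverse sum. Conversely, a convex set `B` containing `0` satisfies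
`t • B ⊆ B` for `t ∈ [0, 1]` and `0⁺B ⊆ B`, so each of the three pieces of `B₁ # B₂` lies in
`B₁ ∩ B₂`.
-/

open Set Metric
open scoped Pointwise

section InverseSum

variable {X : Type*} [AddCommGroup X] [Module ℝ X]

theorem recCone_subset_of_zero_mem {A : Set X} (h0 : (0 : X) ∈ A) : recCone A ⊆ A :=
  fun _ hx => by simpa using hx 1 zero_le_one 0 h0

theorem subset_recCone_of_smul_subset_of_add_subset {A : Set X}
    (hsmul : ∀ t : ℝ, 0 ≤ t → t • A ⊆ A) (hadd : A + A ⊆ A) : A ⊆ recCone A :=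
  fun _ hx t ht _ ha => hadd (add_mem_add ha (hsmul t ht (smul_mem_smul_set hx)))

theorem convex_of_smul_subset_of_add_subset {A : Set X}
    (hsmul : ∀ t : ℝ, 0 ≤ t → t • A ⊆ A) (hadd : A + A ⊆ A) : Convex ℝ A :=
  fun _ hx _ hy a b ha hb _ =>
    hadd (add_mem_add (hsmul a ha (smul_mem_smul_set hx)) (hsmul b hb (smul_mem_smul_set hy)))

theorem Convex.smul_set_subset_of_zero_mem {A : Set X} (hA : Convex ℝ A) (h0 : (0 : X) ∈ A)
    {t : ℝ} (ht : t ∈ Icc (0 : ℝ) 1) : t • A ⊆ A := by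
  rintro _ ⟨x, hx, rfl⟩
  exact hA.smul_mem_of_zero_mem h0 hx ht

theorem invSum_subset_inter {B₁ B₂ : Set X} (h₁ : Convex ℝ B₁) (h₂ : Convex ℝ B₂)
    (h0₁ : (0 : X) ∈ B₁) (h0₂ : (0 : X) ∈ B₂) : invSum B₁ B₂ ⊆ B₁ ∩ B₂ := by
  rintro x ((hx | ⟨hx₁, hx₂⟩) | ⟨hx₂, hx₁⟩)
  · obtain ⟨t, ht, hx₁, hx₂⟩ := mem_iUnion₂.mp hx
    exact ⟨h₁.smul_set_subset_of_zero_mem h0₁ ⟨ht.1.le, ht.2.le⟩ hx₁,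
      h₂.smul_set_subset_of_zero_mem h0₂ ⟨sub_nonneg.mpr ht.2.le, sub_le_self _ ht.1.le⟩ hx₂⟩
  · exact ⟨hx₁, recCone_subset_of_zero_mem h0₂ hx₂⟩
  · exact ⟨recCone_subset_of_zero_mem h0₁ hx₁, hx₂⟩

end InverseSum

theorem stmt6 {X : Type*} [AddCommGroup X] [Module ℝ X]
    (A₁ A₂ : Set X)
    (hcone_smul : ∀ t : ℝ, 0 ≤ t → t • A₁ ⊆ A₁) (hcone_add : A₁ + A₁ ⊆ A₁)
    (h₂ : Convex ℝ A₂) (h0₁ : (0 : X) ∈ A₁) (h0₂ : (0 : X) ∈ A₂) :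
    invSum A₁ A₂ = A₁ ∩ A₂ := by
  have h₁ : Convex ℝ A₁ := convex_of_smul_subset_of_add_subset hcone_smul hcone_add
  refine (invSum_subset_inter h₁ h₂ h0₁ h0₂).antisymm fun _ ⟨hx₁, hx₂⟩ => ?_
  exact Or.inr ⟨hx₂, subset_recCone_of_smul_subset_of_add_subset hcone_smul hcone_add hx₁⟩
end

section
/- Let A₁, A₂ be convex subsets of a Banach space with 0 ∈ A₁ ∩ A₂. Then the inverse sum A₁ # A₂ is convex, and if A₁ and A₂ are closed then A₁ # A₂ is closed. -/
open Set Metric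
open scoped Pointwise

/-!
With Rockafellar's convention `0 ⊙ A = 0⁺A` and `t ⊙ A = t • A` for `t ≠ 0` (`recSmul`),
`A₁ # A₂ = ⋃_{t ∈ [0,1]} (t ⊙ A₁ ∩ (1 - t) ⊙ A₂)`: the projection to `X` of the pairs `(t, x)`
with `(t, x)` in the homogenization `{(t, x) | t ≥ 0, x ∈ t ⊙ A}` of `A₁` and `(1 - t, x)` in
that of `A₂`. For convex `A`, `t ⊙ A` is additive and positively homogeneous in `t ≥ 0`, which
gives convexity. The homogenization of a closed convex `A` is closed: if `x_i ∈ t_i • A` tend to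
`y` with `t_i → 0`, then `(1 - s t_i) • a + s • x_i` lies on the segment from `a ∈ A` to
`x_i / t_i` and tends to `a + s • y`, so `y ∈ 0⁺A`. Closedness of `A₁ # A₂` follows because `t`
ranges over the compact interval `[0, 1]`.
-/

open Set Filter Topology

section Algebra

variable {X : Type*} [AddCommGroup X] [Module ℝ X] {A : Set X}

lemma zero_mem_recCone (A : Set X) : (0 : X) ∈ recCone A := fun _ _ a ha => by simpa using ha

lemma smul_mem_recCone {x : X} (hx : x ∈ recCone A) {c : ℝ} (hc : 0 ≤ c) :
    c • x ∈ recCone A := fun t ht a ha => by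
  rw [smul_smul]
  exact hx (t * c) (mul_nonneg ht hc) a ha

lemma add_mem_recCone {x y : X} (hx : x ∈ recCone A) (hy : y ∈ recCone A) :
    x + y ∈ recCone A := fun t ht a ha => by
  rw [smul_add, ← add_assoc]
  exact hy t ht _ (hx t ht a ha)

lemma add_mem_smul_set_of_mem_recCone {x y : X} {t : ℝ} (ht : 0 < t) (hx : x ∈ recCone A)
    (hy : y ∈ t • A) : x + y ∈ t • A := by
  obtain ⟨a, ha, rfl⟩ := hy
  refine ⟨a + t⁻¹ • x, hx _ (inv_nonneg.2 ht.le) a ha, ?_⟩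
  show t • (a + t⁻¹ • x) = x + t • a
  rw [smul_add, smul_inv_smul₀ ht.ne', add_comm]

def recSmul (t : ℝ) (A : Set X) : Set X := if t = 0 then recCone A else t • A

lemma recSmul_zero : recSmul 0 A = recCone A := if_pos rfl

lemma recSmul_of_ne_zero {t : ℝ} (ht : t ≠ 0) : recSmul t A = t • A := if_neg ht

lemma recSmul_one : recSmul 1 A = A := by rw [recSmul_of_ne_zero one_ne_zero, one_smul]

lemma smul_mem_recSmul {x : X} {c t : ℝ} (hc : 0 ≤ c) (hx : x ∈ recSmul t A) :
    c • x ∈ recSmul (c * t) A := by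
  rcases hc.eq_or_lt with rfl | hc
  · simpa [recSmul_zero] using zero_mem_recCone A
  rcases eq_or_ne t 0 with rfl | ht
  · rw [mul_zero, recSmul_zero] at *
    exact smul_mem_recCone hx hc.le
  · rw [recSmul_of_ne_zero ht] at hx
    rw [recSmul_of_ne_zero (mul_ne_zero hc.ne' ht), mul_smul]
    exact smul_mem_smul_set hx

lemma add_mem_recSmul (hA : Convex ℝ A) {x y : X} {t t' : ℝ} (ht : 0 ≤ t) (ht' : 0 ≤ t')
    (hx : x ∈ recSmul t A) (hy : y ∈ recSmul t' A) : x + y ∈ recSmul (t + t') A := by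
  rcases ht.eq_or_lt with rfl | ht <;> rcases ht'.eq_or_lt with rfl | ht'
  · rw [add_zero, recSmul_zero] at *
    exact add_mem_recCone hx hy
  · rw [zero_add, recSmul_of_ne_zero ht'.ne'] at *
    rw [recSmul_zero] at hx
    exact add_mem_smul_set_of_mem_recCone ht' hx hy
  · rw [add_zero, recSmul_of_ne_zero ht.ne'] at *
    rw [recSmul_zero] at hy
    rw [add_comm]
    exact add_mem_smul_set_of_mem_recCone ht hy hx
  · rw [recSmul_of_ne_zero ht.ne'] at hx
    rw [recSmul_of_ne_zero ht'.ne'] at hy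
    rw [recSmul_of_ne_zero (add_pos ht ht').ne', hA.add_smul ht.le ht'.le]
    exact add_mem_add hx hy

lemma sub_smul_add_smul_mem_of_mem_recSmul (hA : Convex ℝ A) {a x : X} {s t : ℝ} (ha : a ∈ A)
    (hs : 0 ≤ s) (ht : 0 ≤ t) (hst : s * t ≤ 1) (hx : x ∈ recSmul t A) :
    (1 - s * t) • a + s • x ∈ A := by
  rcases ht.eq_or_lt with rfl | ht
  · rw [recSmul_zero] at hx
    simpa using hx s hs a ha
  rw [recSmul_of_ne_zero ht.ne'] at hx
  obtain ⟨b, hb, rfl⟩ := hx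
  rw [smul_smul]
  exact hA ha hb (sub_nonneg.2 hst) (mul_nonneg hs ht.le) (by ring)

lemma mem_invSum_iff {A₁ A₂ : Set X} {x : X} :
    x ∈ invSum A₁ A₂ ↔ ∃ t ∈ Icc (0 : ℝ) 1, x ∈ recSmul t A₁ ∧ x ∈ recSmul (1 - t) A₂ := by
  simp only [invSum, mem_union, mem_iUnion, mem_inter_iff, exists_prop]
  constructor
  · rintro ((⟨t, ht, h₁, h₂⟩ | ⟨h₁, h₂⟩) | ⟨h₂, h₁⟩)
    · exact ⟨t, Ioo_subset_Icc_self ht, by rwa [recSmul_of_ne_zero ht.1.ne'],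
        by rwa [recSmul_of_ne_zero (sub_ne_zero.2 ht.2.ne')]⟩
    · exact ⟨1, right_mem_Icc.2 zero_le_one, by rwa [recSmul_one],
        by rwa [sub_self, recSmul_zero]⟩
    · exact ⟨0, left_mem_Icc.2 zero_le_one, by rwa [recSmul_zero],
        by rwa [sub_zero, recSmul_one]⟩
  · rintro ⟨t, ⟨h0, h1⟩, h₁, h₂⟩
    rcases h0.eq_or_lt with rfl | h0
    · rw [recSmul_zero] at h₁
      rw [sub_zero, recSmul_one] at h₂
      exact Or.inr ⟨h₂, h₁⟩
    rcases h1.eq_or_lt with rfl | h1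
    · rw [recSmul_one] at h₁
      rw [sub_self, recSmul_zero] at h₂
      exact Or.inl (Or.inr ⟨h₁, h₂⟩)
    · rw [recSmul_of_ne_zero h0.ne'] at h₁
      rw [recSmul_of_ne_zero (sub_ne_zero.2 h1.ne')] at h₂
      exact Or.inl (Or.inl ⟨t, ⟨h0, h1⟩, h₁, h₂⟩)

theorem convex_invSum {A₁ A₂ : Set X} (h₁ : Convex ℝ A₁) (h₂ : Convex ℝ A₂) :
    Convex ℝ (invSum A₁ A₂) := by
  intro x hx y hy a b ha hb hab
  rw [mem_invSum_iff] at hx hy ⊢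
  obtain ⟨s, hs, hx₁, hx₂⟩ := hx
  obtain ⟨t, ht, hy₁, hy₂⟩ := hy
  have hcomp : 1 - (a * s + b * t) = a * (1 - s) + b * (1 - t) := by linear_combination -hab
  refine ⟨a * s + b * t, convex_Icc (0 : ℝ) 1 hs ht ha hb hab, ?_, ?_⟩
  · exact add_mem_recSmul h₁ (mul_nonneg ha hs.1) (mul_nonneg hb ht.1)
      (smul_mem_recSmul ha hx₁) (smul_mem_recSmul hb hy₁)
  · rw [hcomp]
    exact add_mem_recSmul h₂ (mul_nonneg ha (sub_nonneg.2 hs.2))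
      (mul_nonneg hb (sub_nonneg.2 ht.2)) (smul_mem_recSmul ha hx₂) (smul_mem_recSmul hb hy₂)

def homogenization (A : Set X) : Set (ℝ × X) := {p | 0 ≤ p.1 ∧ p.2 ∈ recSmul p.1 A}

end Algebra

section Topology

variable {X : Type*} [AddCommGroup X] [Module ℝ X] [TopologicalSpace X]
  [ContinuousAdd X] [ContinuousSMul ℝ X] {A : Set X}

lemma mem_recCone_of_tendsto (hA : Convex ℝ A) (hA' : IsClosed A) {ι : Type*} {l : Filter ι}
    [l.NeBot] {t : ι → ℝ} {x : ι → X} {y : X} (hmem : ∀ᶠ i in l, 0 ≤ t i ∧ x i ∈ recSmul (t i) A)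
    (ht : Tendsto t l (𝓝 0)) (hx : Tendsto x l (𝓝 y)) : y ∈ recCone A := by
  intro s hs a ha
  have hsmall : ∀ᶠ i in l, s * t i ≤ 1 := by
    have := ht.const_mul s
    rw [mul_zero] at this
    exact this.eventually (eventually_le_nhds one_pos)
  have hseg : Tendsto (fun i => (1 - s * t i) • a + s • x i) l (𝓝 (a + s • y)) := by
    have hcoef : Tendsto (fun i => 1 - s * t i) l (𝓝 (1 - s * 0)) :=
      tendsto_const_nhds.sub (ht.const_mul s)
    simpa using (hcoef.smul_const a).add (hx.const_smul s)
  refine hA'.mem_of_tendsto hseg ?_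
  filter_upwards [hmem, hsmall] with i hi hsi
  exact sub_smul_add_smul_mem_of_mem_recSmul hA ha hs hi.1 hsi hi.2

theorem isClosed_homogenization (hA : Convex ℝ A) (hA' : IsClosed A) :
    IsClosed (homogenization A) := by
  refine isClosed_of_closure_subset fun p hp => ?_
  set F := 𝓝[homogenization A] p
  have : F.NeBot := mem_closure_iff_nhdsWithin_neBot.1 hp
  have hmem : ∀ᶠ q in F, q ∈ homogenization A := self_mem_nhdsWithin
  have hfst : Tendsto Prod.fst F (𝓝 p.1) := continuous_fst.continuousWithinAt
  have hsnd : Tendsto Prod.snd F (𝓝 p.2) := continuous_snd.continuousWithinAt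
  have hp₀ : 0 ≤ p.1 := ge_of_tendsto hfst (hmem.mono fun q hq => hq.1)
  refine ⟨hp₀, ?_⟩
  rcases hp₀.eq_or_lt with h0 | h0
  · rw [← h0] at hfst ⊢
    rw [recSmul_zero]
    exact mem_recCone_of_tendsto hA hA' hmem hfst hsnd
  · rw [recSmul_of_ne_zero h0.ne', mem_smul_set_iff_inv_smul_mem₀ h0.ne']
    refine hA'.mem_of_tendsto ((hfst.inv₀ h0.ne').smul hsnd) ?_
    filter_upwards [hmem, hfst.eventually (lt_mem_nhds h0)] with q hq hq₀
    have := hq.2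
    rwa [recSmul_of_ne_zero hq₀.ne', mem_smul_set_iff_inv_smul_mem₀ hq₀.ne'] at this

theorem isClosed_invSum {A₁ A₂ : Set X} (h₁ : Convex ℝ A₁) (h₂ : Convex ℝ A₂)
    (hc₁ : IsClosed A₁) (hc₂ : IsClosed A₂) : IsClosed (invSum A₁ A₂) := by
  let S : Set (Icc (0 : ℝ) 1 × X) :=
    {p | ((p.1 : ℝ), p.2) ∈ homogenization A₁ ∧ (1 - (p.1 : ℝ), p.2) ∈ homogenization A₂}
  have hS : IsClosed S :=
    ((isClosed_homogenization h₁ hc₁).preimage (by fun_prop)).inter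
      ((isClosed_homogenization h₂ hc₂).preimage (by fun_prop))
  have hproj : invSum A₁ A₂ = Prod.snd '' S := by
    ext x
    rw [mem_invSum_iff]
    constructor
    · rintro ⟨t, ht, h₁, h₂⟩
      exact ⟨(⟨t, ht⟩, x), ⟨⟨ht.1, h₁⟩, sub_nonneg.2 ht.2, h₂⟩, rfl⟩
    · rintro ⟨⟨⟨t, ht⟩, x⟩, ⟨⟨-, h₁⟩, -, h₂⟩, rfl⟩
      exact ⟨t, ht, h₁, h₂⟩
  rw [hproj]
  exact isClosedMap_snd_of_compactSpace S hS

end Topology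

theorem stmt7_general {X : Type*} [NormedAddCommGroup X] [NormedSpace ℝ X]
    (A₁ A₂ : Set X) (h₁ : Convex ℝ A₁) (h₂ : Convex ℝ A₂) :
    Convex ℝ (invSum A₁ A₂) ∧
      (IsClosed A₁ → IsClosed A₂ → IsClosed (invSum A₁ A₂)) :=
  ⟨convex_invSum h₁ h₂, isClosed_invSum h₁ h₂⟩

theorem stmt7 {X : Type*} [NormedAddCommGroup X] [NormedSpace ℝ X] [CompleteSpace X]
    (A₁ A₂ : Set X) (h₁ : Convex ℝ A₁) (h₂ : Convex ℝ A₂)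
    (h0₁ : (0 : X) ∈ A₁) (h0₂ : (0 : X) ∈ A₂) :
    Convex ℝ (invSum A₁ A₂) ∧
      (IsClosed A₁ → IsClosed A₂ → IsClosed (invSum A₁ A₂)) :=
  stmt7_general A₁ A₂ h₁ h₂
end

section
/- If a family {K_i : i ∈ I} of convex cones in a Banach space X has the normal property, then it has the closed intersection property (the closure of ⋂_i K_i equals ⋂_i closure(K_i)) and the weak normal property. -/
open Set Metric
open scoped Pointwise

/-!
Scaling by `r > 0` fixes every cone, so the normal property at scale `η` transfers to every
scale: `⋂ i, (K i + r η B) ⊆ ⋂ i, K i + r B`. Letting `r → 0` gives the closed intersection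
property, and choosing `r ‖x*‖ ≤ 1` puts `r B` inside `{x*}°`, which is the weak normal
property with `η_{x*} = r η`.
-/

namespace Set

theorem smul_set_iInter₀ {α β : Type*} [GroupWithZero α] [MulAction α β] {ι : Sort*} {a : α}
    (ha : a ≠ 0) (t : ι → Set β) : a • ⋂ i, t i = ⋂ i, a • t i :=
  image_iInter (MulAction.bijective₀ ha) t

end Set

section Cone

variable {E : Type*} [AddCommGroup E] [Module ℝ E]

theorem smul_set_eq_self_of_cone {K : Set E} (hK : ∀ t : ℝ, 0 ≤ t → t • K ⊆ K) {r : ℝ}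
    (hr : 0 < r) : r • K = K := by
  refine (hK r hr.le).antisymm ?_
  calc K = r • r⁻¹ • K := by rw [smul_smul, mul_inv_cancel₀ hr.ne', one_smul]
    _ ⊆ r • K := smul_set_mono (hK r⁻¹ (inv_nonneg.2 hr.le))

theorem iInter_add_smul_subset_of_normal {ι : Sort*} {K : ι → Set E}
    (hK : ∀ i, ∀ t : ℝ, 0 ≤ t → t • K i ⊆ K i) {B : Set E} {η : ℝ}
    (hN : ⋂ i, (K i + η • B) ⊆ (⋂ i, K i) + B) {r : ℝ} (hr : 0 < r) :
    ⋂ i, (K i + (r * η) • B) ⊆ (⋂ i, K i) + r • B := by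
  have hKr : ∀ i, r • K i = K i := fun i => smul_set_eq_self_of_cone (hK i) hr
  calc ⋂ i, (K i + (r * η) • B) = r • ⋂ i, (K i + η • B) := by
        simp only [smul_set_iInter₀ hr.ne', smul_add, mul_smul, hKr]
    _ ⊆ r • ((⋂ i, K i) + B) := smul_set_mono hN
    _ = (⋂ i, K i) + r • B := by
        rw [smul_add, smul_set_iInter₀ hr.ne', iInter_congr hKr]

end Cone

section Seminormed

variable {E : Type*} [SeminormedAddCommGroup E]

theorem closure_subset_add_closedBall (s : Set E) {ε : ℝ} (hε : 0 < ε) :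
    closure s ⊆ s + closedBall 0 ε :=
  (closure_subset_thickening hε s).trans <| by
    rw [← add_ball_zero]
    exact add_subset_add_left ball_subset_closedBall

theorem mem_closure_of_forall_mem_add_closedBall {s : Set E} {x : E}
    (h : ∀ ε > 0, x ∈ s + closedBall 0 ε) : x ∈ closure s := by
  rw [closure_eq_iInter_thickening]
  refine mem_iInter₂.2 fun δ hδ => ?_
  rw [← add_ball_zero]
  exact add_subset_add_left (closedBall_subset_ball (half_lt_self hδ)) (h _ (half_pos hδ))

theorem ContinuousLinearMap.apply_le_one_of_mem_closedBall [NormedSpace ℝ E] (f : E →L[ℝ] ℝ)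
    {r : ℝ} (hr : ‖f‖ * r ≤ 1) {x : E} (hx : x ∈ closedBall 0 r) : f x ≤ 1 :=
  calc f x ≤ ‖f‖ * ‖x‖ := (le_abs_self _).trans (f.le_opNorm x)
    _ ≤ ‖f‖ * r := mul_le_mul_of_nonneg_left (mem_closedBall_zero_iff.1 hx) (norm_nonneg f)
    _ ≤ 1 := hr

end Seminormed

theorem closure_iInter_eq_of_normal {E : Type*} [NormedAddCommGroup E] [NormedSpace ℝ E]
    {ι : Sort*} {K : ι → Set E}
    (hK : ∀ i, ∀ t : ℝ, 0 ≤ t → t • K i ⊆ K i) {η : ℝ} (hη : 0 < η)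
    (hN : ⋂ i, (K i + η • closedBall (0 : E) 1) ⊆ (⋂ i, K i) + closedBall 0 1) :
    closure (⋂ i, K i) = ⋂ i, closure (K i) := by
  refine (subset_iInter fun i => closure_mono (iInter_subset K i)).antisymm fun x hx => ?_
  refine mem_closure_of_forall_mem_add_closedBall fun ε hε => ?_
  have hscaled := iInter_add_smul_subset_of_normal hK hN hε
  rw [smul_unitClosedBall_of_nonneg hε.le, smul_unitClosedBall_of_nonneg (by positivity)]
    at hscaled
  exact hscaled <| mem_iInter.2 fun i =>
    closure_subset_add_closedBall _ (by positivity) (mem_iInter.1 hx i)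

theorem stmt9_general {X : Type*} [NormedAddCommGroup X] [NormedSpace ℝ X]
    {I : Type*} (K : I → Set X)
    (hcone_smul : ∀ i, ∀ t : ℝ, 0 ≤ t → t • K i ⊆ K i)
    (hnorm : ∃ η > (0:ℝ),
      (⋂ i, (K i + η • closedBall (0:X) 1)) ⊆ (⋂ i, K i) + closedBall (0:X) 1) :
    closure (⋂ i, K i) = (⋂ i, closure (K i)) ∧
      ∀ f : X →L[ℝ] ℝ, ∃ η > (0:ℝ),
        (⋂ i, (K i + η • closedBall (0:X) 1)) ⊆
          closure ((⋂ i, K i) + {x : X | f x ≤ 1}) := by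
  obtain ⟨η, hη, hN⟩ := hnorm
  refine ⟨closure_iInter_eq_of_normal hcone_smul hη hN, fun f => ?_⟩
  set r := (‖f‖ + 1)⁻¹
  have hr : 0 < r := by positivity
  have hfr : ‖f‖ * r ≤ 1 := by
    rw [← div_eq_mul_inv, div_le_one (by positivity)]
    linarith
  refine ⟨r * η, by positivity, (iInter_add_smul_subset_of_normal hcone_smul hN hr).trans ?_⟩
  rw [smul_unitClosedBall_of_nonneg hr.le]
  exact (add_subset_add_left fun x => f.apply_le_one_of_mem_closedBall hfr).trans subset_closure

theorem stmt9 {X : Type*} [NormedAddCommGroup X] [NormedSpace ℝ X] [CompleteSpace X]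
    {I : Type*} [Nonempty I] (K : I → Set X)
    (hcone_smul : ∀ i, ∀ t : ℝ, 0 ≤ t → t • K i ⊆ K i)
    (hcone_add : ∀ i, K i + K i ⊆ K i) (h0 : ∀ i, (0 : X) ∈ K i)
    (hnorm : ∃ η > (0:ℝ),
      (⋂ i, (K i + η • closedBall (0:X) 1)) ⊆ (⋂ i, K i) + closedBall (0:X) 1) :
    closure (⋂ i, K i) = (⋂ i, closure (K i)) ∧
      ∀ f : X →L[ℝ] ℝ, ∃ η > (0:ℝ),
        (⋂ i, (K i + η • closedBall (0:X) 1)) ⊆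
          closure ((⋂ i, K i) + {x : X | f x ≤ 1}) :=
  stmt9_general K hcone_smul hnorm
end

section
/- Let {A_i : i ∈ I} be a family of convex subsets of a Banach space X with nonempty intersection A. If {A_i} has the strong CHIP at every x ∈ A (i.e. N(A, x) = Σ_{i∈I} N(A_i, x)), then for every x ∈ A the family of cones {cone(A_i − x) : i ∈ I} has the weak normal property. -/
open Set Metric
open scoped Pointwise

/-! If `f` lies in `N(A, x)` for `A = ⋂ Aᵢ`, the strong CHIP writes `f = ∑ gᵢ` with
`gᵢ ∈ N(Aᵢ, x)`; each `gᵢ` is `≤ 0` on `cone(Aᵢ - x)`, hence `≤ η ‖gᵢ‖` on its `η`-enlargement,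
so `f ≤ 1` on the intersection of the enlargements once `η ∑ ‖gᵢ‖ ≤ 1`. If `f ∉ N(A, x)`, some
ray of `cone(A - x)` escapes to `f = +∞`, and the cone plus the half-space `{f ≤ 1}` is all of `X`. -/

theorem smul_sub_mem_coneHull_sub {X : Type*} [AddCommGroup X] [Module ℝ X] {A : Set X}
    {x c : X} (hc : c ∈ A) {t : ℝ} (ht : 0 ≤ t) : t • (c - x) ∈ coneHull (A - {x}) :=
  ⟨t, ht, c - x, sub_mem_sub hc rfl, rfl⟩

section NormalCone

variable {X : Type*} [NormedAddCommGroup X] [NormedSpace ℝ X]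

theorem apply_nonpos_of_mem_ncone_of_mem_coneHull {A : Set X} {x y : X} {g : X →L[ℝ] ℝ}
    (hg : g ∈ ncone A x) (hy : y ∈ coneHull (A - {x})) : g y ≤ 0 := by
  obtain ⟨t, ht, _, ⟨a, ha, _, rfl, rfl⟩, rfl⟩ := hy
  rw [map_smul, smul_eq_mul]
  exact mul_nonpos_of_nonneg_of_nonpos ht (hg a ha)

theorem apply_le_of_mem_ncone_of_mem_coneHull_add_closedBall {A : Set X} {x z : X}
    {g : X →L[ℝ] ℝ} {η : ℝ} (hη : 0 ≤ η) (hg : g ∈ ncone A x)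
    (hz : z ∈ coneHull (A - {x}) + η • closedBall (0 : X) 1) : g z ≤ η * ‖g‖ := by
  obtain ⟨y, hy, _, ⟨b, hb, rfl⟩, rfl⟩ := hz
  have hb : ‖b‖ ≤ 1 := by simpa using hb
  calc g (y + η • b) = g y + η * g b := by rw [map_add, map_smul, smul_eq_mul]
    _ ≤ 0 + η * (‖g‖ * ‖b‖) := by
        gcongr
        · exact apply_nonpos_of_mem_ncone_of_mem_coneHull hg hy
        · exact (le_abs_self _).trans (g.le_opNorm b)
    _ ≤ η * ‖g‖ := by
        rw [zero_add]
        gcongr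
        exact mul_le_of_le_one_right (norm_nonneg g) hb

theorem exists_pos_iInter_subset_of_mem_finSums {I : Type*} {A : I → Set X} {x : X}
    {f : X →L[ℝ] ℝ} (hf : f ∈ finSums (fun i => ncone (A i) x)) :
    ∃ η > (0 : ℝ), (⋂ i, (coneHull (A i - {x}) + η • closedBall (0 : X) 1)) ⊆
      {z | f z ≤ 1} := by
  obtain ⟨s, g, hg, rfl⟩ := hf
  set M := ∑ i ∈ s, ‖g i‖
  have hM : 0 ≤ M := Finset.sum_nonneg fun i _ => norm_nonneg _
  refine ⟨1 / (M + 1), by positivity, fun z hz => ?_⟩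
  have hgz : ∀ i ∈ s, g i z ≤ 1 / (M + 1) * ‖g i‖ := fun i hi =>
    apply_le_of_mem_ncone_of_mem_coneHull_add_closedBall (by positivity) (hg i hi)
      (mem_iInter.mp hz i)
  calc (∑ i ∈ s, g i) z = ∑ i ∈ s, g i z := by simp only [FunLike.coe_sum, Finset.sum_apply]
    _ ≤ ∑ i ∈ s, 1 / (M + 1) * ‖g i‖ := Finset.sum_le_sum hgz
    _ = M / (M + 1) := by rw [← Finset.mul_sum]; ring
    _ ≤ 1 := by rw [div_le_one (by positivity)]; linarith

theorem add_setOf_le_one_eq_univ {K : Set X} {f : X →L[ℝ] ℝ} {v : X}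
    (hK : ∀ t : ℝ, 0 ≤ t → t • v ∈ K) (hv : 0 < f v) : K + {z | f z ≤ 1} = univ := by
  refine eq_univ_of_forall fun z => ?_
  set t := max 0 ((f z - 1) / f v)
  have ht : (f z - 1) / f v ≤ t := le_max_right _ _
  refine ⟨t • v, hK t (le_max_left _ _), z - t • v, ?_, add_sub_cancel _ _⟩
  have : f z - 1 ≤ t * f v := (div_le_iff₀ hv).mp ht
  show f (z - t • v) ≤ 1
  rw [map_sub, map_smul, smul_eq_mul]
  linarith

end NormalCone

theorem stmt16_general {X : Type*} [NormedAddCommGroup X] [NormedSpace ℝ X]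
    {I : Type*} (A : I → Set X)
    (hschip : ∀ x ∈ ⋂ i, A i, ncone (⋂ i, A i) x = finSums (fun i => ncone (A i) x)) :
    ∀ x ∈ ⋂ i, A i, ∀ f : X →L[ℝ] ℝ, ∃ η > (0:ℝ),
      (⋂ i, (coneHull (A i - {x}) + η • closedBall (0:X) 1)) ⊆
        closure ((⋂ i, coneHull (A i - {x})) + {z : X | f z ≤ 1}) := by
  intro x hx f
  have hcone : ∀ c ∈ ⋂ i, A i, ∀ t : ℝ, 0 ≤ t → t • (c - x) ∈ ⋂ i, coneHull (A i - {x}) :=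
    fun c hc t ht => mem_iInter.mpr fun i => smul_sub_mem_coneHull_sub (mem_iInter.mp hc i) ht
  by_cases hf : f ∈ ncone (⋂ i, A i) x
  · rw [hschip x hx] at hf
    obtain ⟨η, hη, hsub⟩ := exists_pos_iInter_subset_of_mem_finSums hf
    have h0 : (0 : X) ∈ ⋂ i, coneHull (A i - {x}) := by
      simpa using hcone x hx 0 le_rfl
    exact ⟨η, hη, fun z hz => subset_closure ⟨0, h0, z, hsub hz, zero_add z⟩⟩
  · obtain ⟨c, hc, hfc⟩ : ∃ c ∈ ⋂ i, A i, 0 < f (c - x) := by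
      simpa [ncone] using hf
    refine ⟨1, one_pos, ?_⟩
    rw [add_setOf_le_one_eq_univ (hcone c hc) hfc, closure_univ]
    exact subset_univ _

theorem stmt16 {X : Type*} [NormedAddCommGroup X] [NormedSpace ℝ X] [CompleteSpace X]
    {I : Type*} [Nonempty I] (A : I → Set X) (hconv : ∀ i, Convex ℝ (A i))
    (hne : (⋂ i, A i).Nonempty)
    (hschip : ∀ x ∈ ⋂ i, A i, ncone (⋂ i, A i) x = finSums (fun i => ncone (A i) x)) :
    ∀ x ∈ ⋂ i, A i, ∀ f : X →L[ℝ] ℝ, ∃ η > (0:ℝ),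
      (⋂ i, (coneHull (A i - {x}) + η • closedBall (0:X) 1)) ⊆
        closure ((⋂ i, coneHull (A i - {x})) + {z : X | f z ≤ 1}) :=
  stmt16_general A hschip
end

section
/- A family {A_i : i ∈ I} of convex subsets of a Banach space X with nonempty intersection A has the linear regularity property (there exists γ > 0 with d(x, A) ≤ γ·sup_{i∈I} d(x, A_i) for all x ∈ X) if and only if it has the uniform normal property (there exists η > 0 with ⋂_i (A_i + η·δ·B_X) ⊆ A + δ·B_X for all δ > 0). -/
/-!
Since `{x | d(x, S) < r} ⊆ S + r • B_X ⊆ {x | d(x, S) ≤ r}` for nonempty `S` and `r > 0`, both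
properties bound `d(x, A)` by a multiple of `sup_i d(x, A_i)`. The uniform normal property with
constant `η` yields linear regularity with `γ = 1 / η`; conversely linear regularity with `γ`
yields the uniform normal property with `η = 1 / (2γ)`, the factor `2` bridging the gap between
the strict and the non-strict inequality.
-/

open Set Metric
open scoped Pointwise

section

variable {E : Type*} [NormedAddCommGroup E] [NormedSpace ℝ E] {s : Set E} {x : E} {r : ℝ}
  {ι : Type*} {A : ι → Set E}

theorem infDist_le_of_mem_add_smul_closedUnitBall (hr : 0 ≤ r)
    (h : x ∈ s + r • closedBall (0 : E) 1) : infDist x s ≤ r := by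
  rw [smul_unitClosedBall_of_nonneg hr] at h
  obtain ⟨a, ha, b, hb, rfl⟩ := h
  calc infDist (a + b) s ≤ dist (a + b) a := infDist_le_dist_of_mem ha
    _ = ‖b‖ := by rw [dist_eq_norm, add_sub_cancel_left]
    _ ≤ r := mem_closedBall_zero_iff.1 hb

theorem mem_add_smul_closedUnitBall_of_infDist_lt (hs : s.Nonempty) (h : infDist x s < r) :
    x ∈ s + r • closedBall (0 : E) 1 := by
  rw [smul_unitClosedBall_of_nonneg (infDist_nonneg.trans h.le)]
  have hx : x ∈ s + ball (0 : E) r := by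
    rw [add_ball_zero]
    exact (mem_thickening_iff_infDist_lt hs).2 h
  exact add_subset_add_left ball_subset_closedBall hx

theorem iInter_add_smul_closedUnitBall_subset_of_linearRegular (hne : (⋂ i, A i).Nonempty)
    {γ : ℝ} (hγ : 0 < γ)
    (hreg : ∀ x : E, ∀ c : ℝ, (∀ i, infDist x (A i) ≤ c) → infDist x (⋂ i, A i) ≤ γ * c)
    {δ : ℝ} (hδ : 0 < δ) :
    (⋂ i, (A i + (1 / (2 * γ) * δ) • closedBall (0 : E) 1)) ⊆
      (⋂ i, A i) + δ • closedBall (0 : E) 1 := by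
  intro x hx
  refine mem_add_smul_closedUnitBall_of_infDist_lt hne ?_
  calc infDist x (⋂ i, A i) ≤ γ * (1 / (2 * γ) * δ) :=
        hreg x _ fun i ↦
          infDist_le_of_mem_add_smul_closedUnitBall (by positivity) (mem_iInter.1 hx i)
    _ = δ / 2 := by field_simp
    _ < δ := half_lt_self hδ

theorem infDist_iInter_le_of_uniformNormal [Nonempty ι] (hA : ∀ i, (A i).Nonempty)
    {η : ℝ} (hη : 0 < η)
    (hnorm : ∀ δ > (0 : ℝ), (⋂ i, (A i + (η * δ) • closedBall (0 : E) 1)) ⊆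
      (⋂ i, A i) + δ • closedBall (0 : E) 1)
    {c : ℝ} (hc : ∀ i, infDist x (A i) ≤ c) :
    infDist x (⋂ i, A i) ≤ 1 / η * c := by
  have hc₀ : 0 ≤ c := infDist_nonneg.trans (hc (Classical.arbitrary ι))
  refine le_of_forall_pos_le_add fun ε hε ↦ ?_
  have hδ : 0 < 1 / η * c + ε := by positivity
  have hηδ : c < η * (1 / η * c + ε) := by
    rw [mul_add, ← mul_assoc, mul_one_div_cancel hη.ne', one_mul]
    exact lt_add_of_pos_right c (mul_pos hη hε)
  have hx : x ∈ ⋂ i, (A i + (η * (1 / η * c + ε)) • closedBall (0 : E) 1) :=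
    mem_iInter.2 fun i ↦ mem_add_smul_closedUnitBall_of_infDist_lt (hA i) ((hc i).trans_lt hηδ)
  exact infDist_le_of_mem_add_smul_closedUnitBall hδ.le (hnorm _ hδ hx)

end

theorem stmt17_general {X : Type*} [NormedAddCommGroup X] [NormedSpace ℝ X]
    {I : Type*} [Nonempty I] (A : I → Set X)
    (hne : (⋂ i, A i).Nonempty) :
    (∃ γ > (0:ℝ), ∀ x : X, ∀ c : ℝ,
        (∀ i, infDist x (A i) ≤ c) → infDist x (⋂ i, A i) ≤ γ * c) ↔
      (∃ η > (0:ℝ), ∀ δ > (0:ℝ),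
        (⋂ i, (A i + (η * δ) • closedBall (0:X) 1)) ⊆
          (⋂ i, A i) + δ • closedBall (0:X) 1) := by
  constructor
  · rintro ⟨γ, hγ, hreg⟩
    exact ⟨1 / (2 * γ), by positivity, fun δ hδ ↦
      iInter_add_smul_closedUnitBall_subset_of_linearRegular hne hγ hreg hδ⟩
  · rintro ⟨η, hη, hnorm⟩
    exact ⟨1 / η, by positivity, fun x c hc ↦
      infDist_iInter_le_of_uniformNormal (fun i ↦ hne.mono (iInter_subset A i)) hη hnorm hc⟩

theorem stmt17 {X : Type*} [NormedAddCommGroup X] [NormedSpace ℝ X] [CompleteSpace X]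
    {I : Type*} [Nonempty I] (A : I → Set X) (hconv : ∀ i, Convex ℝ (A i))
    (hne : (⋂ i, A i).Nonempty) :
    (∃ γ > (0:ℝ), ∀ x : X, ∀ c : ℝ,
        (∀ i, infDist x (A i) ≤ c) → infDist x (⋂ i, A i) ≤ γ * c) ↔
      (∃ η > (0:ℝ), ∀ δ > (0:ℝ),
        (⋂ i, (A i + (η * δ) • closedBall (0:X) 1)) ⊆
          (⋂ i, A i) + δ • closedBall (0:X) 1) :=
  stmt17_general A hne
end
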